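/- arXiv:math/0703246 — 5 statements merged into one kernel-verified Lean document; each statement's English description precedes it below -/
import Mathlib

section
/- For every integer q ≥ 1, the function G̃_q : ℂ → ℂ is entire, and there exists a constant C(q) > 0 (depending only on q) such that |G̃_q(z)| ≤ C(q)·|z|^{−q−1} for all z ∈ ℂ with Re z = 1. -/
/-!
On `[0, 1]`, `G_q` is the polynomial `P = (X(1 - X))^q`, which vanishes to order `q` at both
endpoints. Integrating by parts `q` times against `e^{zt}` therefore produces no boundary terms
and gives `G̃_q(z) = (-1/z)^q ∫₀¹ P^{(q)}(t) e^{zt} dt`; one more integration by parts bounds the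
last integral by `C/|z|` when `Re z = 1`, since then `|e^{zt}| ≤ e` on `[0, 1]`. Holomorphy comes
from differentiating under the integral sign over a compact interval.
-/

open MeasureTheory Complex Real

/-- `G_q(t) = (t(1-t))^q` for `0 ≤ t ≤ 1`, and `0` otherwise. -/
noncomputable def Gq (q : ℕ) (t : ℝ) : ℝ :=
  if 0 ≤ t ∧ t ≤ 1 then (t * (1 - t)) ^ q else 0

/-- `G̃_q(z) = ∫₀^∞ G_q(t) e^{zt} dt`. -/
noncomputable def Gtilde (q : ℕ) (z : ℂ) : ℂ :=
  ∫ t in Set.Ioi (0 : ℝ), (Gq q t : ℂ) * Complex.exp (z * t)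

open Polynomial Set Interval

theorem differentiable_intervalIntegral_mul_cexp {f : ℝ → ℂ} {a b : ℝ}
    (hf : IntervalIntegrable f volume a b) :
    Differentiable ℂ fun z : ℂ => ∫ t in a..b, f t * cexp (z * t) := by
  intro z₀
  set R := max |a| |b|
  have hR : ∀ t ∈ Ι a b, |t| ≤ R := fun t ht => by
    rcases mem_uIcc.1 (uIoc_subset_uIcc ht) with ⟨h₁, h₂⟩ | ⟨h₁, h₂⟩
    · exact abs_le_max_abs_abs h₁ h₂
    · exact (abs_le_max_abs_abs h₁ h₂).trans (max_comm _ _).le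
  have hexp : ∀ t ∈ Ι a b, ∀ z ∈ Metric.ball z₀ 1,
      ‖cexp (z * t)‖ ≤ Real.exp ((‖z₀‖ + 1) * R) := fun t ht z hz => by
    rw [norm_exp, re_mul_ofReal, Real.exp_le_exp]
    have hz' : ‖z‖ ≤ ‖z₀‖ + 1 := (norm_lt_of_mem_ball hz).le
    calc z.re * t ≤ |z.re| * |t| := by rw [← abs_mul]; exact le_abs_self _
      _ ≤ (‖z₀‖ + 1) * R := by
        gcongr
        · exact (abs_re_le_norm z).trans hz'
        · exact hR t ht
  refine (intervalIntegral.hasDerivAt_integral_of_dominated_loc_of_deriv_le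
    (F' := fun z t => f t * (t * cexp (z * t)))
    (bound := fun t => ‖f t‖ * (R * Real.exp ((‖z₀‖ + 1) * R)))
    (Metric.ball_mem_nhds z₀ one_pos) ?_ ?_ ?_ ?_ ?_ ?_).2.differentiableAt
  · exact .of_forall fun z => hf.def'.aestronglyMeasurable.mul (by fun_prop)
  · exact hf.mul_continuousOn (by fun_prop)
  · exact hf.def'.aestronglyMeasurable.mul (by fun_prop)
  · refine .of_forall fun t ht z hz => ?_
    rw [norm_mul, norm_mul, norm_real, Real.norm_eq_abs]
    gcongr
    exacts [hR t ht, hexp t ht z hz]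
  · exact hf.norm.mul_const _
  · refine .of_forall fun t _ z _ => ?_
    simpa [mul_comm, mul_assoc] using
      (((hasDerivAt_id z).mul_const (t : ℂ)).cexp).const_mul (f t)

theorem intervalIntegral_eval_mul_cexp_eq (P : ℂ[X]) {z : ℂ} (hz : z ≠ 0) (a b : ℝ) :
    ∫ t in a..b, P.eval (t : ℂ) * cexp (z * t) =
      (P.eval (b : ℂ) * cexp (z * b) - P.eval (a : ℂ) * cexp (z * a)) / z -
        (∫ t in a..b, (derivative P).eval (t : ℂ) * cexp (z * t)) / z := by
  have hu (t : ℝ) : HasDerivAt (fun t : ℝ => P.eval (t : ℂ)) ((derivative P).eval (t : ℂ)) t :=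
    (P.hasDerivAt (t : ℂ)).comp_ofReal
  have hv (t : ℝ) : HasDerivAt (fun t : ℝ => cexp (z * t) / z) (cexp (z * t)) t := by
    simpa [mul_div_cancel_right₀ _ hz] using
      ((hasDerivAt_id (t : ℂ)).const_mul z).cexp.comp_ofReal.div_const z
  rw [intervalIntegral.integral_mul_deriv_eq_deriv_mul (fun t _ => hu t) (fun t _ => hv t)
    (Continuous.intervalIntegrable (by fun_prop) _ _)
    (Continuous.intervalIntegrable (by fun_prop) _ _)]
  simp only [← mul_div_assoc, intervalIntegral.integral_div]
  ring

theorem eval_iterate_derivative_eq_zero_of_pow_dvd {R : Type*} [CommRing R] {P : R[X]} {a : R}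
    {q j : ℕ} (hP : (X - C a) ^ q ∣ P) (hj : j < q) : (derivative^[j] P).eval a = 0 := by
  obtain ⟨r, hr⟩ := pow_sub_dvd_iterate_derivative_of_pow_dvd j hP
  simp [hr, zero_pow (Nat.sub_ne_zero_of_lt hj)]

theorem intervalIntegral_eval_mul_cexp_eq_iterate_derivative {z : ℂ} (hz : z ≠ 0) {a b : ℝ}
    (q : ℕ) (P : ℂ[X]) (ha : ∀ j < q, (derivative^[j] P).eval (a : ℂ) = 0)
    (hb : ∀ j < q, (derivative^[j] P).eval (b : ℂ) = 0) :
    ∫ t in a..b, P.eval (t : ℂ) * cexp (z * t) =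
      (-z⁻¹) ^ q * ∫ t in a..b, (derivative^[q] P).eval (t : ℂ) * cexp (z * t) := by
  induction q generalizing P with
  | zero => simp
  | succ q ih =>
    have hPa : P.eval (a : ℂ) = 0 := ha 0 q.succ_pos
    have hPb : P.eval (b : ℂ) = 0 := hb 0 q.succ_pos
    rw [intervalIntegral_eval_mul_cexp_eq P hz, hPa, hPb,
      ih (derivative P) (fun j hj => ha (j + 1) (by omega)) (fun j hj => hb (j + 1) (by omega)),
      Function.iterate_succ_apply]
    ring

theorem norm_cexp_mul_le_exp_one {z : ℂ} (hz : z.re ≤ 1) {t : ℝ} (ht : t ∈ Icc (0 : ℝ) 1) :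
    ‖cexp (z * t)‖ ≤ Real.exp 1 := by
  rw [norm_exp, re_mul_ofReal, Real.exp_le_exp]
  nlinarith [ht.1, ht.2]

theorem exists_norm_intervalIntegral_eval_mul_cexp_le (P : ℂ[X]) :
    ∃ C, ∀ z : ℂ, z ≠ 0 → z.re ≤ 1 →
      ‖∫ t in (0 : ℝ)..1, P.eval (t : ℂ) * cexp (z * t)‖ ≤ C * ‖z‖⁻¹ := by
  obtain ⟨M, hM⟩ := isCompact_Icc.exists_bound_of_continuousOn
    (s := Icc (0 : ℝ) 1) (f := fun t : ℝ => (derivative P).eval (t : ℂ)) (by fun_prop)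
  refine ⟨‖P.eval 1‖ * Real.exp 1 + ‖P.eval 0‖ + M * Real.exp 1, fun z hz hre => ?_⟩
  have hI : ‖∫ t in (0 : ℝ)..1, (derivative P).eval (t : ℂ) * cexp (z * t)‖ ≤ M * Real.exp 1 := by
    refine (intervalIntegral.norm_integral_le_of_norm_le_const (C := M * Real.exp 1) fun t ht => ?_).trans_eq (by simp)
    have ht' : t ∈ Icc (0 : ℝ) 1 := Ioc_subset_Icc_self (by simpa using ht)
    rw [norm_mul]
    exact mul_le_mul (hM t ht') (norm_cexp_mul_le_exp_one hre ht') (norm_nonneg _)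
      ((norm_nonneg _).trans (hM t ht'))
  have he1 : ‖cexp z‖ ≤ Real.exp 1 := by
    simpa using norm_cexp_mul_le_exp_one hre (t := 1) (by simp)
  rw [intervalIntegral_eval_mul_cexp_eq P hz, ← sub_div, norm_div, div_eq_mul_inv]
  simp only [ofReal_one, ofReal_zero, mul_one, mul_zero, Complex.exp_zero]
  gcongr
  calc _ ≤ ‖P.eval 1 * cexp z‖ + ‖P.eval 0‖ +
        ‖∫ t in (0 : ℝ)..1, (derivative P).eval (t : ℂ) * cexp (z * t)‖ :=
          norm_sub_le_of_le (norm_sub_le _ _) le_rfl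
    _ ≤ _ := by rw [norm_mul]; gcongr

noncomputable def GqPoly (q : ℕ) : ℂ[X] := (X * (1 - X)) ^ q

theorem Gtilde_eq_intervalIntegral (q : ℕ) (z : ℂ) :
    Gtilde q z = ∫ t in (0 : ℝ)..1, (GqPoly q).eval (t : ℂ) * cexp (z * t) := by
  rw [Gtilde, setIntegral_eq_of_subset_of_forall_sdiff_eq_zero measurableSet_Ioi
    Ioc_subset_Ioi_self, intervalIntegral.integral_of_le zero_le_one]
  · refine setIntegral_congr_fun measurableSet_Ioc fun t ht => ?_
    simp [Gq, GqPoly, ht.1.le, ht.2]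
  · rintro t ⟨ht₀, ht⟩
    simp [Gq, show ¬t ≤ 1 from fun h => ht ⟨ht₀, h⟩]

theorem GqPoly_iterate_derivative_eval_eq_zero {q j : ℕ} (hj : j < q) :
    (derivative^[j] (GqPoly q)).eval 0 = 0 ∧ (derivative^[j] (GqPoly q)).eval 1 = 0 := by
  refine ⟨eval_iterate_derivative_eq_zero_of_pow_dvd ?_ hj,
    eval_iterate_derivative_eq_zero_of_pow_dvd ?_ hj⟩
  · exact ⟨(1 - X) ^ q, by simp [GqPoly, mul_pow]⟩
  · exact ⟨(-X) ^ q, by rw [GqPoly, ← mul_pow]; congr 1; simp; ring⟩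

theorem stmt0_general (q : ℕ) :
    Differentiable ℂ (Gtilde q) ∧
    ∃ C : ℝ, 0 < C ∧ ∀ z : ℂ, z.re = 1 →
      ‖Gtilde q z‖ ≤ C * ‖z‖ ^ (-(q : ℝ) - 1) := by
  have hG : Gtilde q = fun z => ∫ t in (0 : ℝ)..1, (GqPoly q).eval (t : ℂ) * cexp (z * t) :=
    funext (Gtilde_eq_intervalIntegral q)
  refine ⟨hG ▸ differentiable_intervalIntegral_mul_cexp
    (Continuous.intervalIntegrable (by fun_prop) _ _), ?_⟩
  obtain ⟨C, hC⟩ := exists_norm_intervalIntegral_eval_mul_cexp_le (derivative^[q] (GqPoly q))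
  refine ⟨max C 1, by positivity, fun z hre => ?_⟩
  have hz : z ≠ 0 := by rintro rfl; simp at hre
  have hzpow : ‖z‖ ^ (-(q : ℝ) - 1) = ‖z‖⁻¹ ^ q * ‖z‖⁻¹ := by
    rw [show -(q : ℝ) - 1 = -((q + 1 : ℕ) : ℝ) by push_cast; ring, Real.rpow_neg (norm_nonneg z),
      Real.rpow_natCast, pow_succ, mul_inv, inv_pow]
  rw [Gtilde_eq_intervalIntegral, intervalIntegral_eval_mul_cexp_eq_iterate_derivative hz q _
    (fun j hj => by simpa using (GqPoly_iterate_derivative_eval_eq_zero hj).1)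
    (fun j hj => by simpa using (GqPoly_iterate_derivative_eval_eq_zero hj).2),
    norm_mul, norm_pow, norm_neg, norm_inv, hzpow]
  calc _ ≤ ‖z‖⁻¹ ^ q * (C * ‖z‖⁻¹) := by gcongr; exact hC z hz hre.le
    _ ≤ max C 1 * (‖z‖⁻¹ ^ q * ‖z‖⁻¹) := by
      rw [mul_left_comm]; gcongr; exact le_max_left _ _

theorem stmt0 (q : ℕ) (hq : 1 ≤ q) :
    Differentiable ℂ (Gtilde q) ∧
    ∃ C : ℝ, 0 < C ∧ ∀ z : ℂ, z.re = 1 →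
      ‖Gtilde q z‖ ≤ C * ‖z‖ ^ (-(q : ℝ) - 1) :=
  stmt0_general q
end

section
/- There exists an absolute constant C > 0 such that for every ν ∈ ℂ with Re ν ≥ 0 and every integer p with p + 1/2 > Re ν (so that 1/2 − ν + p has positive real part and Γ(1/2 − ν + p) ≠ 0), one has |Γ(1/2 + ν + p) / Γ(1/2 − ν + p)| ≤ C·(|p| + |ν| + 1)^{2 Re ν}. -/
/-!
With `z = 1/2 - conj ν + p` one has `‖Γ(1/2 - ν + p)‖ = ‖Γ z‖` and `1/2 + ν + p = z + 2 Re ν`,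
so it suffices to show `‖Γ(z + s)‖ ≤ 4 R ^ s ‖Γ z‖` for `Re z > 0`, `s ≥ 0` and
`R ≥ max 1 ‖z + s‖`. Split `s = m + θ` with `m ∈ ℕ` and `θ ∈ [0, 1]`. The functional equation
turns the shift by `m` into `m` factors `z + θ + j`, each of norm at most `‖z + s‖`. The shift by
`θ` is compared on Euler's finite products `GammaSeq`: by weighted AM-GM,
`‖w‖^(2(1-θ)) ‖w + 1‖^(2θ) ≤ ‖w + θ‖² + 1/4`, so each factor of the telescoping product costs at
most `1 + 1/(8k²)` when `Re w ≥ k`, and these costs multiply to less than `2`.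
-/

open Complex Real

open Finset Filter

open scoped Nat ComplexConjugate

namespace Complex

lemma norm_le_norm_add_ofReal {w : ℂ} (hw : 0 ≤ w.re) {x : ℝ} (hx : 0 ≤ x) :
    ‖w‖ ≤ ‖w + x‖ := by
  rw [← sq_le_sq₀ (norm_nonneg _) (norm_nonneg _), Complex.sq_norm, Complex.sq_norm,
    normSq_apply, normSq_apply]
  simp only [add_re, ofReal_re, add_im, ofReal_im, add_zero]
  nlinarith

lemma rpow_norm_sq_mul_rpow_norm_add_one_sq_le (w : ℂ) {θ : ℝ} (hθ0 : 0 ≤ θ)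
    (hθ1 : θ ≤ 1) : (‖w‖ ^ 2) ^ (1 - θ) * (‖w + 1‖ ^ 2) ^ θ ≤ ‖w + θ‖ ^ 2 + 1 / 4 :=
  calc (‖w‖ ^ 2) ^ (1 - θ) * (‖w + 1‖ ^ 2) ^ θ
      ≤ (1 - θ) * ‖w‖ ^ 2 + θ * ‖w + 1‖ ^ 2 :=
        geom_mean_le_arith_mean2_weighted (by linarith) hθ0 (by positivity) (by positivity)
          (by ring)
    _ = ‖w + θ‖ ^ 2 + θ * (1 - θ) := by
        simp only [Complex.sq_norm, normSq_apply, add_re, add_im, ofReal_re, ofReal_im, one_re,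
          one_im]
        ring
    _ ≤ ‖w + θ‖ ^ 2 + 1 / 4 := by nlinarith [sq_nonneg (2 * θ - 1)]

lemma norm_mul_rpow_norm_add_one_le (w : ℂ) {θ k : ℝ} (hθ0 : 0 ≤ θ) (hθ1 : θ ≤ 1)
    (hk : 0 < k) (hkw : k ≤ w.re) :
    ‖w‖ * ‖w + 1‖ ^ θ ≤ (1 + 1 / (8 * k ^ 2)) * ‖w + θ‖ * ‖w‖ ^ θ := by
  have hkθ : k ^ 2 ≤ ‖w + θ‖ ^ 2 := by
    have : k ≤ ‖w + θ‖ := by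
      refine le_trans ?_ (re_le_norm _)
      simp only [add_re, ofReal_re]
      linarith
    nlinarith
  have hc : ‖w + θ‖ ^ 2 + 1 / 4 ≤ (1 + 1 / (8 * k ^ 2)) ^ 2 * ‖w + θ‖ ^ 2 := by
    have : 1 / 4 ≤ ‖w + θ‖ ^ 2 / (4 * k ^ 2) := by
      rw [le_div_iff₀ (by positivity)]; linarith
    have : 0 ≤ (1 / (8 * k ^ 2)) ^ 2 * ‖w + θ‖ ^ 2 := by positivity
    have e : (1 + 1 / (8 * k ^ 2)) ^ 2 * ‖w + θ‖ ^ 2 =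
        ‖w + θ‖ ^ 2 + ‖w + θ‖ ^ 2 / (4 * k ^ 2) + (1 / (8 * k ^ 2)) ^ 2 * ‖w + θ‖ ^ 2 := by
      field_simp; ring
    linarith
  refine (pow_le_pow_iff_left₀ (by positivity) (by positivity) two_ne_zero).mp ?_
  calc (‖w‖ * ‖w + 1‖ ^ θ) ^ 2
      = (‖w‖ ^ 2) ^ (1 - θ) * (‖w + 1‖ ^ 2) ^ θ * (‖w‖ ^ 2) ^ θ := by
        rw [mul_right_comm, ← rpow_add' (sq_nonneg _) (by norm_num), sub_add_cancel, rpow_one,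
          mul_pow, rpow_pow_comm (norm_nonneg _)]
    _ ≤ (1 + 1 / (8 * k ^ 2)) ^ 2 * ‖w + θ‖ ^ 2 * (‖w‖ ^ 2) ^ θ := by
        gcongr ?_ * _
        exact (rpow_norm_sq_mul_rpow_norm_add_one_sq_le w hθ0 hθ1).trans hc
    _ = ((1 + 1 / (8 * k ^ 2)) * ‖w + θ‖ * ‖w‖ ^ θ) ^ 2 := by
        rw [mul_pow, mul_pow, rpow_pow_comm (norm_nonneg _)]

lemma two_sub_one_div_natCast_add_one_nonneg (n : ℕ) : 0 ≤ 2 - 1 / ((n : ℝ) + 1) := by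
  have : 1 / ((n : ℝ) + 1) ≤ 1 := div_le_one_of_le₀ (by simp) (by positivity)
  linarith

/-- The constant `2 - 1 / (n + 1)` bounds the product `∏_{k ≤ n} (1 + 1 / (8 k²))`. -/
lemma rpow_norm_mul_prod_norm_le {z : ℂ} (hz : 0 ≤ z.re) {θ : ℝ} (hθ0 : 0 ≤ θ)
    (hθ1 : θ ≤ 1) (n : ℕ) :
    ‖z + (n + 1)‖ ^ θ * ∏ j ∈ range n, ‖z + (j + 1)‖ ≤
      (2 - 1 / (n + 1)) * ‖z + 1‖ ^ θ * ∏ j ∈ range n, ‖z + θ + (j + 1)‖ := by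
  induction n with
  | zero => norm_num
  | succ n ih =>
    push_cast
    set w := z + (n + 1) with hw
    set c : ℝ := 1 + 1 / (8 * ((n : ℝ) + 1) ^ 2) with hc
    have hstep : ‖w‖ * ‖w + 1‖ ^ θ ≤ c * ‖w + θ‖ * ‖w‖ ^ θ :=
      norm_mul_rpow_norm_add_one_le w hθ0 hθ1 (by positivity)
        (by simp only [hw, add_re, natCast_re, one_re]; linarith)
    have hconst : c * (2 - 1 / ((n : ℝ) + 1)) ≤ 2 - 1 / ((n : ℝ) + 1 + 1) := by
      rw [← sub_nonneg]
      have e : 2 - 1 / ((n : ℝ) + 1 + 1) - c * (2 - 1 / ((n : ℝ) + 1))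
          = (6 * n ^ 2 + 11 * n + 6) / (8 * (n + 1) ^ 3 * (n + 2)) := by
        rw [hc]; field_simp; ring
      rw [e]; positivity
    have hconst_nonneg := two_sub_one_div_natCast_add_one_nonneg n
    calc ‖z + ((n : ℂ) + 1 + 1)‖ ^ θ * ∏ j ∈ range (n + 1), ‖z + (j + 1)‖
        = ‖w‖ * ‖w + 1‖ ^ θ * ∏ j ∈ range n, ‖z + (j + 1)‖ := by
          rw [prod_range_succ, hw, add_assoc z]; ring
      _ ≤ c * ‖w + θ‖ * (‖w‖ ^ θ * ∏ j ∈ range n, ‖z + (j + 1)‖) := by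
          rw [← mul_assoc]; gcongr
      _ ≤ c * ‖w + θ‖ *
            ((2 - 1 / (n + 1)) * ‖z + 1‖ ^ θ * ∏ j ∈ range n, ‖z + θ + (j + 1)‖) := by
          gcongr
      _ = c * (2 - 1 / ((n : ℝ) + 1)) * ‖z + 1‖ ^ θ *
            ∏ j ∈ range (n + 1), ‖z + θ + (j + 1)‖ := by
          rw [prod_range_succ, hw, add_right_comm z]; ring
      _ ≤ _ := by gcongr

lemma norm_GammaSeq {s : ℂ} {n : ℕ} (hn : 0 < n) :
    ‖GammaSeq s n‖ = (n : ℝ) ^ s.re * n ! / ∏ j ∈ range (n + 1), ‖s + j‖ := by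
  rw [GammaSeq, norm_div, norm_mul, norm_natCast_cpow_of_pos hn, norm_prod, norm_natCast]

lemma norm_GammaSeq_add_le {z : ℂ} (hz : 0 < z.re) {θ : ℝ} (hθ0 : 0 ≤ θ) (hθ1 : θ ≤ 1)
    {n : ℕ} (hn : 0 < n) :
    ‖GammaSeq (z + θ) n‖ ≤ 2 * (‖z‖ + 1) ^ θ * ‖GammaSeq z n‖ := by
  have hpos : ∀ {w : ℂ}, 0 < w.re → ∀ j : ℕ, 0 < ‖w + j‖ := fun hw j =>
    norm_pos_iff.mpr (ne_zero_of_re_pos (by simp only [add_re, natCast_re]; positivity))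
  have hzθ : 0 < (z + θ).re := by simp only [add_re, ofReal_re]; positivity
  have hprod (w : ℂ) :
      ∏ j ∈ range (n + 1), ‖w + j‖ = ‖w‖ * ∏ j ∈ range n, ‖w + (j + 1)‖ := by
    rw [prod_range_succ']; push_cast; simp [mul_comm]
  have key : (n : ℝ) ^ θ * ∏ j ∈ range (n + 1), ‖z + j‖ ≤
      2 * (‖z‖ + 1) ^ θ * ∏ j ∈ range (n + 1), ‖z + θ + j‖ := by
    have hn_le : (n : ℝ) ^ θ ≤ ‖z + (n + 1)‖ ^ θ := by
      refine rpow_le_rpow n.cast_nonneg ((re_le_norm _).trans' ?_) hθ0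
      simp only [add_re, natCast_re, one_re]; linarith
    have hz_le : ‖z‖ ≤ ‖z + θ‖ := norm_le_norm_add_ofReal hz.le hθ0
    have h1_le : ‖z + 1‖ ^ θ ≤ (‖z‖ + 1) ^ θ :=
      rpow_le_rpow (norm_nonneg _) ((norm_add_le _ _).trans_eq (by simp)) hθ0
    have hconst_le : 2 - 1 / ((n : ℝ) + 1) ≤ 2 := by
      have : 0 ≤ 1 / ((n : ℝ) + 1) := by positivity
      linarith
    have hconst_nonneg := two_sub_one_div_natCast_add_one_nonneg n
    rw [hprod, hprod]
    calc (n : ℝ) ^ θ * (‖z‖ * ∏ j ∈ range n, ‖z + (j + 1)‖)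
        ≤ ‖z‖ * (‖z + (n + 1)‖ ^ θ * ∏ j ∈ range n, ‖z + (j + 1)‖) := by
          rw [mul_left_comm]; gcongr
      _ ≤ ‖z‖ * ((2 - 1 / (n + 1)) * ‖z + 1‖ ^ θ * ∏ j ∈ range n, ‖z + θ + (j + 1)‖) :=
          mul_le_mul_of_nonneg_left (rpow_norm_mul_prod_norm_le hz.le hθ0 hθ1 n) (norm_nonneg _)
      _ ≤ ‖z + θ‖ * (2 * (‖z‖ + 1) ^ θ * ∏ j ∈ range n, ‖z + θ + (j + 1)‖) := by
          gcongr
      _ = _ := by ring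
  have hP : 0 < ∏ j ∈ range (n + 1), ‖z + j‖ := prod_pos fun j _ => hpos hz j
  have hQ : 0 < ∏ j ∈ range (n + 1), ‖z + θ + j‖ := prod_pos fun j _ => hpos hzθ j
  have hnR : (0 : ℝ) < n := by exact_mod_cast hn
  rw [norm_GammaSeq hn, norm_GammaSeq hn, mul_div_assoc', div_le_div_iff₀ hQ hP]
  simp only [add_re, ofReal_re, rpow_add hnR]
  calc (n : ℝ) ^ z.re * (n : ℝ) ^ θ * n ! * ∏ j ∈ range (n + 1), ‖z + j‖
      = (n : ℝ) ^ z.re * n ! * ((n : ℝ) ^ θ * ∏ j ∈ range (n + 1), ‖z + j‖) := by ring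
    _ ≤ (n : ℝ) ^ z.re * n ! * (2 * (‖z‖ + 1) ^ θ * ∏ j ∈ range (n + 1), ‖z + θ + j‖) := by
        gcongr
    _ = _ := by ring

theorem norm_Gamma_add_le_of_le_one {z : ℂ} (hz : 0 < z.re) {θ : ℝ} (hθ0 : 0 ≤ θ)
    (hθ1 : θ ≤ 1) : ‖Gamma (z + θ)‖ ≤ 2 * (‖z‖ + 1) ^ θ * ‖Gamma z‖ :=
  le_of_tendsto_of_tendsto (GammaSeq_tendsto_Gamma _).norm
    ((GammaSeq_tendsto_Gamma z).norm.const_mul _)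
    (eventually_atTop.mpr ⟨1, fun _ hn => norm_GammaSeq_add_le hz hθ0 hθ1 hn⟩)

theorem norm_Gamma_add_nat_le {w : ℂ} (hw : 0 < w.re) {R : ℝ} (m : ℕ)
    (hR : ‖w + m‖ ≤ R) : ‖Gamma (w + m)‖ ≤ R ^ m * ‖Gamma w‖ := by
  induction m with
  | zero => simp
  | succ m ih =>
    rw [Nat.cast_add, Nat.cast_one, ← add_assoc] at hR ⊢
    have hwm : 0 < (w + m).re := by simp only [add_re, natCast_re]; positivity
    have hle : ‖w + m‖ ≤ ‖w + m + 1‖ := by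
      exact_mod_cast norm_le_norm_add_ofReal hwm.le zero_le_one
    rw [Gamma_add_one _ (ne_zero_of_re_pos hwm), norm_mul, pow_succ', mul_assoc]
    exact mul_le_mul (hle.trans hR) (ih (hle.trans hR)) (norm_nonneg _)
      ((norm_nonneg _).trans (hle.trans hR))

theorem norm_Gamma_add_le {z : ℂ} (hz : 0 < z.re) {s R : ℝ} (hs : 0 ≤ s) (hR1 : 1 ≤ R)
    (hR : ‖z + s‖ ≤ R) : ‖Gamma (z + s)‖ ≤ 4 * R ^ s * ‖Gamma z‖ := by
  set m := ⌊s⌋₊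
  set θ := s - m with hθ
  have hθ0 : 0 ≤ θ := sub_nonneg.mpr (Nat.floor_le hs)
  have hθ1 : θ ≤ 1 := by linarith [Nat.lt_floor_add_one s]
  have hsplit : z + s = z + θ + m := by rw [hθ]; push_cast; ring
  have hzR : ‖z‖ ≤ R := (norm_le_norm_add_ofReal hz.le hs).trans hR
  have hθR : (‖z‖ + 1) ^ θ ≤ 2 * R ^ θ :=
    calc (‖z‖ + 1) ^ θ ≤ (2 * R) ^ θ := by gcongr; linarith
      _ = 2 ^ θ * R ^ θ := mul_rpow zero_le_two (by linarith)
      _ ≤ 2 * R ^ θ := by gcongr; exact rpow_le_self_of_one_le one_le_two hθ1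
  have hzθ : 0 < (z + θ).re := by simp only [add_re, ofReal_re]; positivity
  rw [hsplit] at hR ⊢
  calc ‖Gamma (z + θ + m)‖ ≤ R ^ m * ‖Gamma (z + θ)‖ := norm_Gamma_add_nat_le hzθ m hR
    _ ≤ R ^ m * (2 * (2 * R ^ θ) * ‖Gamma z‖) := by
        gcongr
        exact (norm_Gamma_add_le_of_le_one hz hθ0 hθ1).trans (by gcongr)
    _ = 4 * R ^ (m + θ : ℝ) * ‖Gamma z‖ := by
        rw [rpow_add (by linarith), rpow_natCast]; ring
    _ = 4 * R ^ s * ‖Gamma z‖ := by rw [hθ, add_sub_cancel]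

end Complex

theorem stmt4 :
    ∃ C : ℝ, 0 < C ∧ ∀ ν : ℂ, 0 ≤ ν.re → ∀ p : ℤ, ν.re < (p : ℝ) + 1 / 2 →
      ‖Complex.Gamma (1 / 2 + ν + p) / Complex.Gamma (1 / 2 - ν + p)‖ ≤
        C * (|(p : ℝ)| + ‖ν‖ + 1) ^ (2 * ν.re) := by
  refine ⟨4, by norm_num, fun ν hν p hp => ?_⟩
  lift p to ℕ using by exact_mod_cast (show (-1 : ℝ) < p by linarith)
  push_cast at hp
  set z : ℂ := 1 / 2 - conj ν + (p : ℤ)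
  have hz : 0 < z.re := by
    have : z.re = 1 / 2 - ν.re + p := by simp [z]
    linarith
  have hden : ‖Complex.Gamma (1 / 2 - ν + (p : ℤ))‖ = ‖Complex.Gamma z‖ := by
    rw [← norm_conj, ← Complex.Gamma_conj]; simp [z, map_ofNat]
  have hnum : 1 / 2 + ν + (p : ℤ) = z + (2 * ν.re : ℝ) := by
    rw [← add_conj]; simp only [z]; ring
  have hR : ‖z + (2 * ν.re : ℝ)‖ ≤ |((p : ℤ) : ℝ)| + ‖ν‖ + 1 := by
    rw [← hnum]
    calc ‖1 / 2 + ν + (p : ℤ)‖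
        ≤ ‖(1 / 2 : ℂ)‖ + ‖ν‖ + ‖((p : ℤ) : ℂ)‖ := norm_add₃_le
      _ = 1 / 2 + ‖ν‖ + |((p : ℤ) : ℝ)| := by simp
      _ ≤ _ := by linarith
  rw [norm_div, hden, hnum, div_le_iff₀ (norm_pos_iff.mpr (Gamma_ne_zero_of_re_pos hz))]
  exact norm_Gamma_add_le hz (by linarith)
    (by linarith [abs_nonneg ((p : ℤ) : ℝ), norm_nonneg ν]) hR
end

section
/- Let 0 < ε < 1/4 and K ≥ 1 be real, and let λ : {1, 2, 3, ...} → [0, ∞) be a sequence satisfying Σ_{n ≤ x} λ(n)² ≤ K·x^{1+ε} for every real x ≥ 1. Then there exists a constant C(ε) > 0 depending only on ε such that for all reals y > 1/2 and y₀ ≥ 1: Σ_{1 ≤ n ≤ y₀/y} (λ(n)/√n)·y₀·(ny)^{1/2−ε} + Σ_{n > y₀/y} (λ(n)/√n)·(y₀/√(ny))·exp(−ny/y₀) ≤ C(ε)·K^{1/2}·y₀²·y^{−1/2}·(y·y₀)^{ε}. -/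
/-!
Split the sum at `n ≈ y₀ / y`. On the head `n * y > 1 / 2`, so `(n y)^(1/2 - ε) / √n ≤ 2 √y`, and
Cauchy–Schwarz turns the second-moment bound into `∑_{n ≤ x} λ(n) ≤ √K x^(1 + ε/2)`. On the tail
the second-moment bound is only used through `λ(n) ≤ √K n`, after which the exponential makes
the series geometric with ratio `e^(-y/y₀)`, whose sum is at most `1 + y₀ / y`. The leftover
factors are powers of `y` and `y₀` that `y > 1/2`, `y₀ ≥ 1` and `ε ≤ 1` absorb into `(y y₀)^ε`
at the cost of a constant, here `C = 14`.
-/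

open Real Finset

lemma half_le_rpow {t ε : ℝ} (ht : 1 / 2 ≤ t) (hε0 : 0 ≤ ε) (hε1 : ε ≤ 1) : 1 / 2 ≤ t ^ ε :=
  calc (1 / 2 : ℝ) = (1 / 2) ^ (1 : ℝ) := (rpow_one _).symm
    _ ≤ (1 / 2) ^ ε := rpow_le_rpow_of_exponent_ge (by norm_num) (by norm_num) hε1
    _ ≤ t ^ ε := rpow_le_rpow (by norm_num) ht hε0

lemma inv_one_sub_exp_neg_le {q : ℝ} (hq : 0 < q) : (1 - exp (-q))⁻¹ ≤ 1 + q⁻¹ := by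
  have h : (1 + q) * exp (-q) ≤ 1 := by
    calc (1 + q) * exp (-q) ≤ exp q * exp (-q) := by gcongr; linarith [add_one_le_exp q]
      _ = 1 := by rw [← exp_add, add_neg_cancel, exp_zero]
  have hpos : 0 < 1 - exp (-q) := by linarith [exp_lt_one_iff.mpr (neg_lt_zero.mpr hq)]
  rw [inv_le_iff_one_le_mul₀ hpos]
  field_simp
  nlinarith

section SecondMoment

variable {lam : ℕ → ℝ} {K s : ℝ}

lemma sq_le_of_sum_Icc_floor_sq_le
    (hsum : ∀ x : ℝ, 1 ≤ x → ∑ n ∈ Icc 1 ⌊x⌋₊, lam n ^ 2 ≤ K * x ^ s) {n : ℕ} (hn : 1 ≤ n) :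
    lam n ^ 2 ≤ K * n ^ s := by
  have h := hsum n (by exact_mod_cast hn)
  rw [Nat.floor_natCast] at h
  exact (single_le_sum (fun i _ => sq_nonneg (lam i)) (mem_Icc.mpr ⟨hn, le_rfl⟩)).trans h

lemma le_sqrt_mul_of_sum_Icc_floor_sq_le
    (hsum : ∀ x : ℝ, 1 ≤ x → ∑ n ∈ Icc 1 ⌊x⌋₊, lam n ^ 2 ≤ K * x ^ s) (hK : 0 ≤ K) (hs : s ≤ 2)
    {n : ℕ} (hn : 1 ≤ n) : lam n ≤ √K * n := by
  have hn' : (1 : ℝ) ≤ n := by exact_mod_cast hn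
  have h : lam n ^ 2 ≤ K * n ^ 2 :=
    calc lam n ^ 2 ≤ K * n ^ s := sq_le_of_sum_Icc_floor_sq_le hsum hn
      _ ≤ K * n ^ (2 : ℝ) := by gcongr
      _ = K * n ^ 2 := by rw [rpow_two]
  calc lam n ≤ |lam n| := le_abs_self _
    _ ≤ √(K * n ^ 2) := abs_le_sqrt h
    _ = √K * n := by rw [sqrt_mul hK, sqrt_sq (Nat.cast_nonneg n)]

lemma sum_Icc_floor_le_sqrt_mul
    (hsum : ∀ x : ℝ, 1 ≤ x → ∑ n ∈ Icc 1 ⌊x⌋₊, lam n ^ 2 ≤ K * x ^ s) (hK : 0 ≤ K) {x : ℝ}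
    (hx : 0 ≤ x) : ∑ n ∈ Icc 1 ⌊x⌋₊, lam n ≤ √K * x ^ ((1 + s) / 2) := by
  rcases lt_or_ge x 1 with hx1 | hx1
  · rw [Nat.floor_eq_zero.mpr hx1, Icc_eq_empty (by norm_num), sum_empty]
    positivity
  have hcs : (∑ n ∈ Icc 1 ⌊x⌋₊, lam n) ^ 2 ≤ K * x ^ (1 + s) :=
    calc (∑ n ∈ Icc 1 ⌊x⌋₊, lam n) ^ 2 ≤ #(Icc 1 ⌊x⌋₊) * ∑ n ∈ Icc 1 ⌊x⌋₊, lam n ^ 2 :=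
          sq_sum_le_card_mul_sum_sq
      _ ≤ x * (K * x ^ s) := by
          rw [Nat.card_Icc, Nat.add_sub_cancel]
          gcongr
          · exact Nat.floor_le hx
          · exact hsum x hx1
      _ = K * x ^ (1 + s) := by rw [rpow_add (by linarith), rpow_one]; ring
  calc ∑ n ∈ Icc 1 ⌊x⌋₊, lam n ≤ |∑ n ∈ Icc 1 ⌊x⌋₊, lam n| := le_abs_self _
    _ ≤ √(K * x ^ (1 + s)) := abs_le_sqrt hcs
    _ = √K * x ^ ((1 + s) / 2) := by rw [sqrt_mul hK, sqrt_eq_rpow (x ^ _), ← rpow_mul hx]; ring_nf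

end SecondMoment

lemma div_rpow_half_le_four_mul_rpow {y y₀ ε : ℝ} (hy : 1 / 2 ≤ y) (hy₀ : 1 ≤ y₀) (hε0 : 0 ≤ ε)
    (hε1 : ε ≤ 1) : (y₀ / y) ^ (ε / 2) ≤ 4 * (y * y₀) ^ ε := by
  have hroot : √(y₀ / y) ≤ 4 * (y * y₀) := by
    rw [sqrt_le_iff, div_le_iff₀ (by linarith)]
    constructor
    · positivity
    · have hy3 : (1 / 2) ^ 3 ≤ y ^ 3 := by gcongr
      nlinarith [mul_le_mul_of_nonneg_right hy3 (sq_nonneg y₀)]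
  calc (y₀ / y) ^ (ε / 2) = √(y₀ / y) ^ ε := by
        rw [sqrt_eq_rpow, ← rpow_mul (by positivity)]; ring_nf
    _ ≤ (4 * (y * y₀)) ^ ε := by gcongr
    _ = 4 ^ ε * (y * y₀) ^ ε := mul_rpow (by norm_num) (by positivity)
    _ ≤ 4 * (y * y₀) ^ ε := by
        gcongr
        calc (4 : ℝ) ^ ε ≤ 4 ^ (1 : ℝ) := rpow_le_rpow_of_exponent_le (by norm_num) hε1
          _ = 4 := rpow_one 4

lemma rpow_half_sub_div_sqrt_le {y ε : ℝ} (hy : 1 / 2 ≤ y) (hε0 : 0 ≤ ε) (hε1 : ε ≤ 1) {n : ℕ}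
    (hn : 1 ≤ n) : (n * y) ^ (1 / 2 - ε) / √n ≤ 2 * √y := by
  have hn' : (1 : ℝ) ≤ n := by exact_mod_cast hn
  have hny : 1 / 2 ≤ n * y := by nlinarith
  have hP := half_le_rpow hny hε0 hε1
  have hsqrt : 0 < √(n : ℝ) := sqrt_pos.mpr (by linarith)
  rw [rpow_sub (by linarith), ← sqrt_eq_rpow, sqrt_mul (by linarith), div_le_iff₀ hsqrt,
    div_le_iff₀ (by linarith)]
  have hgap : 0 ≤ 2 * (n * y) ^ ε - 1 := by linarith
  nlinarith [mul_nonneg (mul_nonneg hsqrt.le (sqrt_nonneg y)) hgap]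

lemma sum_Icc_floor_div_mul_rpow_le {lam : ℕ → ℝ} {K s y y₀ ε : ℝ}
    (hsum : ∀ x : ℝ, 1 ≤ x → ∑ n ∈ Icc 1 ⌊x⌋₊, lam n ^ 2 ≤ K * x ^ s) (hK : 0 ≤ K)
    (hlam : ∀ n, 0 ≤ lam n) (hε0 : 0 ≤ ε) (hε1 : ε ≤ 1) (hy : 1 / 2 ≤ y) (hy₀ : 0 ≤ y₀) :
    ∑ n ∈ Icc 1 ⌊y₀ / y⌋₊, (lam n / √n) * y₀ * (n * y) ^ (1 / 2 - ε)
      ≤ 2 * y₀ * √y * (√K * (y₀ / y) ^ ((1 + s) / 2)) :=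
  calc ∑ n ∈ Icc 1 ⌊y₀ / y⌋₊, (lam n / √n) * y₀ * (n * y) ^ (1 / 2 - ε)
      ≤ ∑ n ∈ Icc 1 ⌊y₀ / y⌋₊, 2 * y₀ * √y * lam n := by
        refine sum_le_sum fun n hn => ?_
        calc lam n / √n * y₀ * (n * y) ^ (1 / 2 - ε)
            = y₀ * lam n * ((n * y) ^ (1 / 2 - ε) / √n) := by ring
          _ ≤ y₀ * lam n * (2 * √y) := by
              gcongr
              · exact mul_nonneg hy₀ (hlam n)
              · exact rpow_half_sub_div_sqrt_le hy hε0 hε1 (mem_Icc.mp hn).1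
          _ = 2 * y₀ * √y * lam n := by ring
    _ = 2 * y₀ * √y * ∑ n ∈ Icc 1 ⌊y₀ / y⌋₊, lam n := (mul_sum _ _ _).symm
    _ ≤ 2 * y₀ * √y * (√K * (y₀ / y) ^ ((1 + s) / 2)) := by
        gcongr
        exact sum_Icc_floor_le_sqrt_mul hsum hK (by positivity)

noncomputable def tailTerm (lam : ℕ → ℝ) (y y₀ : ℝ) (n : ℕ) : ℝ :=
  if y₀ / y < (n : ℝ) ∧ 1 ≤ n then
    (lam n / √n) * (y₀ / √(n * y)) * exp (-(n * y) / y₀) else 0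

section Tail

variable {lam : ℕ → ℝ} {c y y₀ : ℝ}

lemma tailTerm_nonneg (hlam : ∀ n, 0 ≤ lam n) (hy₀ : 0 ≤ y₀) (n : ℕ) :
    0 ≤ tailTerm lam y y₀ n := by
  unfold tailTerm
  split_ifs
  · have := hlam n
    positivity
  · exact le_rfl

lemma tailTerm_le_geometric (hlam : ∀ n, 1 ≤ n → lam n ≤ c * n) (hc : 0 ≤ c) (hy : 0 < y)
    (hy₀ : 0 < y₀) (n : ℕ) : tailTerm lam y y₀ n ≤ c * (y₀ / √y) * exp (-(y / y₀)) ^ n := by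
  unfold tailTerm
  split_ifs with h
  · have hn : (0 : ℝ) < n := by exact_mod_cast h.2
    have hsplit : lam n / √n * (y₀ / √(n * y)) = lam n / n * (y₀ / √y) := by
      rw [sqrt_mul hn.le]
      field_simp
      rw [sq_sqrt hn.le]
    rw [hsplit, ← exp_nat_mul, show (n : ℝ) * -(y / y₀) = -(n * y) / y₀ by ring]
    gcongr
    exact (div_le_iff₀ hn).mpr (hlam n h.2)
  · positivity

lemma summable_tailTerm (hlam0 : ∀ n, 0 ≤ lam n) (hlam : ∀ n, 1 ≤ n → lam n ≤ c * n)
    (hc : 0 ≤ c) (hy : 0 < y) (hy₀ : 0 < y₀) : Summable (tailTerm lam y y₀) := by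
  have hr : exp (-(y / y₀)) < 1 := exp_lt_one_iff.mpr (neg_lt_zero.mpr (div_pos hy hy₀))
  exact ((summable_geometric_of_lt_one (exp_pos _).le hr).mul_left _).of_nonneg_of_le
    (tailTerm_nonneg hlam0 hy₀.le) (tailTerm_le_geometric hlam hc hy hy₀)

lemma tsum_tailTerm_le (hlam0 : ∀ n, 0 ≤ lam n) (hlam : ∀ n, 1 ≤ n → lam n ≤ c * n)
    (hc : 0 ≤ c) (hy : 0 < y) (hy₀ : 0 < y₀) :
    ∑' n, tailTerm lam y y₀ n ≤ c * (y₀ / √y) * (1 + y₀ / y) := by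
  have hq : 0 < y / y₀ := div_pos hy hy₀
  have hr : exp (-(y / y₀)) < 1 := exp_lt_one_iff.mpr (neg_lt_zero.mpr hq)
  calc ∑' n, tailTerm lam y y₀ n ≤ ∑' n : ℕ, c * (y₀ / √y) * exp (-(y / y₀)) ^ n :=
        (summable_tailTerm hlam0 hlam hc hy hy₀).tsum_le_tsum (tailTerm_le_geometric hlam hc hy hy₀)
          ((summable_geometric_of_lt_one (exp_pos _).le hr).mul_left _)
    _ = c * (y₀ / √y) * (1 - exp (-(y / y₀)))⁻¹ := by
        rw [tsum_mul_left, tsum_geometric_of_lt_one (exp_pos _).le hr]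
    _ ≤ c * (y₀ / √y) * (1 + y₀ / y) := by
        gcongr
        simpa only [inv_div] using inv_one_sub_exp_neg_le hq

end Tail

section Comparison

variable {lam : ℕ → ℝ} {K ε y y₀ : ℝ}

lemma sum_Icc_floor_div_mul_rpow_le_eight_mul
    (hsum : ∀ x : ℝ, 1 ≤ x → ∑ n ∈ Icc 1 ⌊x⌋₊, lam n ^ 2 ≤ K * x ^ (1 + ε)) (hK : 0 ≤ K)
    (hlam : ∀ n, 0 ≤ lam n) (hε0 : 0 ≤ ε) (hε1 : ε ≤ 1) (hy : 1 / 2 ≤ y) (hy₀ : 1 ≤ y₀) :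
    ∑ n ∈ Icc 1 ⌊y₀ / y⌋₊, (lam n / √n) * y₀ * (n * y) ^ (1 / 2 - ε)
      ≤ 8 * √K * (y₀ / √y) * y₀ * (y * y₀) ^ ε := by
  have hsqrt : √y * (y₀ / y) = y₀ / √y := by
    field_simp
    rw [sq_sqrt (by linarith)]
  calc _ ≤ 2 * y₀ * √y * (√K * (y₀ / y) ^ ((1 + (1 + ε)) / 2)) :=
        sum_Icc_floor_div_mul_rpow_le hsum hK hlam hε0 hε1 hy (by linarith)
    _ = 2 * √K * y₀ * (√y * (y₀ / y)) * (y₀ / y) ^ (ε / 2) := by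
        rw [show (1 + (1 + ε)) / 2 = 1 + ε / 2 by ring, rpow_add (by positivity), rpow_one]
        ring
    _ ≤ 2 * √K * y₀ * (√y * (y₀ / y)) * (4 * (y * y₀) ^ ε) := by
        gcongr
        exact div_rpow_half_le_four_mul_rpow hy hy₀ hε0 hε1
    _ = 8 * √K * (y₀ / √y) * y₀ * (y * y₀) ^ ε := by rw [hsqrt]; ring

lemma tsum_tailTerm_le_six_mul (hlam0 : ∀ n, 0 ≤ lam n) (hlam : ∀ n, 1 ≤ n → lam n ≤ √K * n)
    (hε0 : 0 ≤ ε) (hε1 : ε ≤ 1) (hy : 1 / 2 ≤ y) (hy₀ : 1 ≤ y₀) :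
    ∑' n, tailTerm lam y y₀ n ≤ 6 * √K * (y₀ / √y) * y₀ * (y * y₀) ^ ε := by
  have hy0 : 0 < y := by linarith
  have hP : 1 / 2 ≤ (y * y₀) ^ ε := half_le_rpow (by nlinarith) hε0 hε1
  have hquot : y₀ / y ≤ 2 * y₀ := by rw [div_le_iff₀ hy0]; nlinarith
  calc _ ≤ √K * (y₀ / √y) * (1 + y₀ / y) :=
        tsum_tailTerm_le hlam0 hlam (sqrt_nonneg K) hy0 (by linarith)
    _ ≤ √K * (y₀ / √y) * (6 * y₀ * (y * y₀) ^ ε) := by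
        gcongr
        nlinarith
    _ = 6 * √K * (y₀ / √y) * y₀ * (y * y₀) ^ ε := by ring

end Comparison

theorem stmt5 (ε : ℝ) (hε0 : 0 < ε) (hε : ε < 1 / 4) :
    ∃ C : ℝ, 0 < C ∧ ∀ K : ℝ, 1 ≤ K → ∀ lam : ℕ → ℝ, (∀ n : ℕ, 0 ≤ lam n) →
      (∀ x : ℝ, 1 ≤ x → ∑ n ∈ Finset.Icc 1 ⌊x⌋₊, (lam n) ^ 2 ≤ K * x ^ (1 + ε)) →
      ∀ y y₀ : ℝ, 1 / 2 < y → 1 ≤ y₀ →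
        Summable (fun n : ℕ => if y₀ / y < (n : ℝ) ∧ 1 ≤ n then
          (lam n / Real.sqrt n) * (y₀ / Real.sqrt (n * y)) * Real.exp (-(n * y) / y₀)
          else 0) ∧
        (∑ n ∈ Finset.Icc 1 ⌊y₀ / y⌋₊, (lam n / Real.sqrt n) * y₀ * (n * y) ^ (1 / 2 - ε)) +
          (∑' n : ℕ, if y₀ / y < (n : ℝ) ∧ 1 ≤ n then
            (lam n / Real.sqrt n) * (y₀ / Real.sqrt (n * y)) * Real.exp (-(n * y) / y₀)
            else 0) ≤
          C * Real.sqrt K * y₀ ^ 2 * y ^ (-(1 : ℝ) / 2) * (y * y₀) ^ ε := by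
  refine ⟨14, by norm_num, fun K hK lam hlam hsum y y₀ hy hy₀ => ?_⟩
  have hε1 : ε ≤ 1 := by linarith
  have hlam_le (n : ℕ) (hn : 1 ≤ n) : lam n ≤ √K * n :=
    le_sqrt_mul_of_sum_Icc_floor_sq_le hsum (by linarith) (by linarith) hn
  refine ⟨summable_tailTerm hlam hlam_le (sqrt_nonneg K) (by linarith) (by linarith), ?_⟩
  calc _ ≤ 8 * √K * (y₀ / √y) * y₀ * (y * y₀) ^ ε + 6 * √K * (y₀ / √y) * y₀ * (y * y₀) ^ ε :=
        add_le_add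
          (sum_Icc_floor_div_mul_rpow_le_eight_mul hsum (by linarith) hlam hε0.le hε1 hy.le hy₀)
          (tsum_tailTerm_le_six_mul hlam hlam_le hε0.le hε1 hy.le hy₀)
    _ = 14 * √K * y₀ ^ 2 * y ^ (-(1 : ℝ) / 2) * (y * y₀) ^ ε := by
        rw [neg_div, rpow_neg (by linarith), ← sqrt_eq_rpow]
        ring
end

section
/- There exists an absolute constant C > 0 with the following property. Let ℓ ≥ 1 and p be integers with |p| ≥ ℓ, let u be a nonzero real number, and let g : ℝ∖{0} → ℂ be a measurable function satisfying ∫_{ℝ∖{0}} |g(v)|² dv/|v| ≤ 1 and |g(v)| ≤ |3p|^{ℓ+3/2}·|v|^{−ℓ−1} for all v ≠ 0. Then ∫₀^∞ min(y^{1/4}, y^{ℓ}) · |g(y/u)| dy/y ≤ C·|p|^{1/2}·min(|3pu|^{1/4}, |3pu|^{ℓ}). -/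
/-!
Split the integral at `A = |3pu|`. The kernel `min (y ^ a) (y ^ b)` (`a ≤ b`) is at most
`(y / A) ^ a` times its value at `A` for `y ≤ A`, and at most `(y / A) ^ b` times it for `y ≥ A`.
On `(0, A]` this makes the kernel square-integrable for `dy / y` with norm `O(min (A ^ a) (A ^ b))`,
and Cauchy–Schwarz against `g (y / u)` finishes, since `dv / |v|` is invariant under `v ↦ v / u`.
On `(A, ∞)` the decay `|g v| ≤ K |v| ^ (-b - 1)` leaves an integrand `O(y ^ (-2))`.
-/

open MeasureTheory Real Set

lemma lintegral_Ioc_rpow {r A : ℝ} (hr : -1 < r) (hA : 0 ≤ A) :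
    ∫⁻ y in Ioc 0 A, ENNReal.ofReal (y ^ r) = ENNReal.ofReal (A ^ (r + 1) / (r + 1)) := by
  rw [← ofReal_integral_eq_lintegral_ofReal
      (intervalIntegral.intervalIntegrable_rpow' hr).1
      ((ae_restrict_iff' measurableSet_Ioc).2 (.of_forall fun y hy => rpow_nonneg hy.1.le r)),
    ← intervalIntegral.integral_of_le hA, integral_rpow (.inl hr), zero_rpow (by linarith),
    sub_zero]

lemma lintegral_Ioi_rpow {r A : ℝ} (hr : r < -1) (hA : 0 < A) :
    ∫⁻ y in Ioi A, ENNReal.ofReal (y ^ r) = ENNReal.ofReal (-A ^ (r + 1) / (r + 1)) := by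
  rw [← ofReal_integral_eq_lintegral_ofReal (integrableOn_Ioi_rpow_of_lt hr hA)
      ((ae_restrict_iff' measurableSet_Ioi).2
        (.of_forall fun y hy => rpow_nonneg (hA.trans hy).le r)),
    integral_Ioi_rpow_of_lt hr hA]

lemma lintegral_ofReal_comp_div_div_abs {φ : ℝ → ℝ} (hφ : Measurable φ) {u : ℝ}
    (hu : u ≠ 0) :
    ∫⁻ y, ENNReal.ofReal (φ (y / u) / |y|) = ∫⁻ v, ENNReal.ofReal (φ v / |v|) := by
  have hH : Measurable fun v => ENNReal.ofReal (φ v / |v|) :=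
    (hφ.div continuous_abs.measurable).ennreal_ofReal
  have hrescale (y : ℝ) : φ (y / u) / |y| = |u|⁻¹ * (φ (y * u⁻¹) / |y * u⁻¹|) := by
    rw [abs_mul, abs_inv, ← div_eq_mul_inv]
    rcases eq_or_ne y 0 with rfl | hy
    · simp
    · field_simp
  simp_rw [hrescale, ENNReal.ofReal_mul (inv_nonneg.2 (abs_nonneg u))]
  rw [lintegral_const_mul' _ _ ENNReal.ofReal_ne_top,
    ← lintegral_map hH (measurable_mul_const _), map_volume_mul_right (inv_ne_zero hu),
    lintegral_smul_measure, inv_inv, smul_eq_mul, ← mul_assoc,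
    ← ENNReal.ofReal_mul (by positivity),
    inv_mul_cancel₀ (abs_ne_zero.2 hu), ENNReal.ofReal_one, one_mul]

lemma rpow_add_mul_rpow_mul_mul_rpow_neg {x y : ℝ} (hx : 0 < x) (hy : 0 < y) (s t : ℝ) :
    x ^ (t + s) * y ^ s * (x * y) ^ (-s) = x ^ t := by
  rw [mul_rpow hx.le hy.le, rpow_neg hx.le, rpow_neg hy.le, rpow_add hx]
  field_simp

lemma abs_three_mul_rpow_half_le (x : ℝ) :
    |3 * x| ^ (1 / 2 : ℝ) ≤ 2 * |x| ^ (1 / 2 : ℝ) := by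
  rw [abs_mul, abs_of_pos three_pos, mul_rpow zero_le_three (abs_nonneg x), ← sqrt_eq_rpow 3]
  gcongr
  rw [sqrt_le_iff]
  norm_num

section MinRpow

variable {a b y A : ℝ}

lemma min_rpow_le_div_rpow_mul_of_le (hab : a ≤ b) (hy : 0 < y) (hyA : y ≤ A) :
    min (y ^ a) (y ^ b) ≤ (y / A) ^ a * min (A ^ a) (A ^ b) := by
  have hA : 0 < A := hy.trans_le hyA
  have ht : 0 < y / A := div_pos hy hA
  have hscale (r : ℝ) : (y / A) ^ r * A ^ r = y ^ r := by
    rw [← mul_rpow ht.le hA.le, div_mul_cancel₀ y hA.ne']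
  rw [mul_min_of_nonneg _ _ (rpow_nonneg ht.le a), hscale, ← hscale b]
  gcongr min _ (?_ * _)
  exact rpow_le_rpow_of_exponent_ge ht ((div_le_one hA).2 hyA) hab

lemma min_rpow_le_div_rpow_mul_of_ge (hab : a ≤ b) (hA : 0 < A) (hAy : A ≤ y) :
    min (y ^ a) (y ^ b) ≤ (y / A) ^ b * min (A ^ a) (A ^ b) := by
  have ht : 0 < y / A := div_pos (hA.trans_le hAy) hA
  have hscale (r : ℝ) : (y / A) ^ r * A ^ r = y ^ r := by
    rw [← mul_rpow ht.le hA.le, div_mul_cancel₀ y hA.ne']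
  rw [mul_min_of_nonneg _ _ (rpow_nonneg ht.le b), hscale, ← hscale a]
  gcongr min (?_ * _) _
  exact rpow_le_rpow_of_exponent_le ((one_le_div hA).2 hAy) hab

lemma lintegral_Ioc_min_rpow_sq_div_le (ha : 0 < a) (hab : a ≤ b) (hA : 0 < A) :
    ∫⁻ y in Ioc 0 A, ENNReal.ofReal (min (y ^ a) (y ^ b) ^ 2 / y) ≤
      ENNReal.ofReal (min (A ^ a) (A ^ b) ^ 2 / (2 * a)) := by
  set M := min (A ^ a) (A ^ b)
  calc ∫⁻ y in Ioc 0 A, ENNReal.ofReal (min (y ^ a) (y ^ b) ^ 2 / y)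
      ≤ ∫⁻ y in Ioc 0 A,
          ENNReal.ofReal ((M / A ^ a) ^ 2) * ENNReal.ofReal (y ^ (2 * a - 1)) := by
        refine setLIntegral_mono' measurableSet_Ioc fun y ⟨hy, hyA⟩ => ?_
        rw [← ENNReal.ofReal_mul (sq_nonneg _)]
        refine ENNReal.ofReal_le_ofReal ?_
        calc min (y ^ a) (y ^ b) ^ 2 / y ≤ ((y / A) ^ a * M) ^ 2 / y := by
              gcongr
              exact min_rpow_le_div_rpow_mul_of_le hab hy hyA
          _ = (M / A ^ a) ^ 2 * y ^ (2 * a - 1) := by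
              rw [div_rpow hy.le hA.le, rpow_sub hy, rpow_one, mul_comm 2 a, rpow_mul hy.le,
                rpow_two]
              field_simp
    _ = ENNReal.ofReal (M ^ 2 / (2 * a)) := by
        rw [lintegral_const_mul' _ _ ENNReal.ofReal_ne_top, lintegral_Ioc_rpow (by linarith) hA.le,
          ← ENNReal.ofReal_mul (sq_nonneg _), sub_add_cancel, mul_comm 2 a, rpow_mul hA.le,
          rpow_two]
        congr 1
        field_simp

lemma lintegral_Ioc_min_rpow_mul_div_le (ha : 0 < a) (hab : a ≤ b) (hA : 0 < A) {φ : ℝ → ℝ}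
    (hφ : Measurable φ) (hφ0 : 0 ≤ φ) :
    ∫⁻ y in Ioc 0 A, ENNReal.ofReal (min (y ^ a) (y ^ b) * φ y / y) ≤
      ENNReal.ofReal (min (A ^ a) (A ^ b) / √(2 * a)) *
        (∫⁻ y in Ioc 0 A, ENNReal.ofReal (φ y ^ 2 / y)) ^ (1 / 2 : ℝ) := by
  set F : ℝ → ENNReal := fun y => ENNReal.ofReal (min (y ^ a) (y ^ b) / √y)
  set G : ℝ → ENNReal := fun y => ENNReal.ofReal (φ y / √y)
  have hsq {x y : ℝ} (hx : 0 ≤ x) (hy : 0 < y) :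
      ENNReal.ofReal (x / √y) ^ (2 : ℝ) = ENNReal.ofReal (x ^ 2 / y) := by
    rw [ENNReal.ofReal_rpow_of_nonneg (by positivity) zero_le_two, rpow_two, div_pow,
      sq_sqrt hy.le]
  have hmin0 {y : ℝ} (hy : 0 < y) : 0 ≤ min (y ^ a) (y ^ b) :=
    le_min (rpow_nonneg hy.le a) (rpow_nonneg hy.le b)
  have hF : ∫⁻ y in Ioc 0 A, F y ^ (2 : ℝ) ≤
      ENNReal.ofReal (min (A ^ a) (A ^ b) ^ 2 / (2 * a)) := by
    rw [setLIntegral_congr_fun measurableSet_Ioc fun y hy => hsq (hmin0 hy.1) hy.1]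
    exact lintegral_Ioc_min_rpow_sq_div_le ha hab hA
  have hG :
      ∫⁻ y in Ioc 0 A, G y ^ (2 : ℝ) = ∫⁻ y in Ioc 0 A, ENNReal.ofReal (φ y ^ 2 / y) :=
    setLIntegral_congr_fun measurableSet_Ioc fun y hy => hsq (hφ0 y) hy.1
  have hFG : ∀ y ∈ Ioc 0 A, ENNReal.ofReal (min (y ^ a) (y ^ b) * φ y / y) = (F * G) y := by
    intro y hy
    rw [Pi.mul_apply, ← ENNReal.ofReal_mul (div_nonneg (hmin0 hy.1) (sqrt_nonneg y)),
      div_mul_div_comm, mul_self_sqrt hy.1.le]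
  have hsqrt : ENNReal.ofReal (min (A ^ a) (A ^ b) ^ 2 / (2 * a)) ^ (1 / 2 : ℝ) =
      ENNReal.ofReal (min (A ^ a) (A ^ b) / √(2 * a)) := by
    rw [ENNReal.ofReal_rpow_of_nonneg (by positivity) (by norm_num), ← sqrt_eq_rpow,
      sqrt_div' _ (by positivity), sqrt_sq (hmin0 hA)]
  calc ∫⁻ y in Ioc 0 A, ENNReal.ofReal (min (y ^ a) (y ^ b) * φ y / y)
      = ∫⁻ y in Ioc 0 A, (F * G) y := setLIntegral_congr_fun measurableSet_Ioc hFG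
    _ ≤ (∫⁻ y in Ioc 0 A, F y ^ (2 : ℝ)) ^ (1 / 2 : ℝ) *
          (∫⁻ y in Ioc 0 A, G y ^ (2 : ℝ)) ^ (1 / 2 : ℝ) :=
        ENNReal.lintegral_mul_le_Lp_mul_Lq _ .two_two (by fun_prop) (by fun_prop)
    _ ≤ _ := by
        rw [hG, ← hsqrt]
        gcongr

lemma lintegral_Ioi_min_rpow_mul_div_le (hab : a ≤ b) (hA : 0 < A) {c : ℝ} (hc : 0 ≤ c)
    {φ : ℝ → ℝ} (hφ : ∀ y, A < y → φ y ≤ c * y ^ (-b - 1)) :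
    ∫⁻ y in Ioi A, ENNReal.ofReal (min (y ^ a) (y ^ b) * φ y / y) ≤
      ENNReal.ofReal (c * A ^ (-b - 1) * min (A ^ a) (A ^ b)) := by
  set M := min (A ^ a) (A ^ b)
  calc ∫⁻ y in Ioi A, ENNReal.ofReal (min (y ^ a) (y ^ b) * φ y / y)
      ≤ ∫⁻ y in Ioi A,
          ENNReal.ofReal (c * A ^ (-b) * M) * ENNReal.ofReal (y ^ (-2 : ℝ)) := by
        refine setLIntegral_mono' measurableSet_Ioi fun y (hAy : A < y) => ?_
        have hy : 0 < y := hA.trans hAy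
        rw [← ENNReal.ofReal_mul (by positivity)]
        refine ENNReal.ofReal_le_ofReal ?_
        calc min (y ^ a) (y ^ b) * φ y / y ≤ min (y ^ a) (y ^ b) * (c * y ^ (-b - 1)) / y := by
              gcongr
              exact hφ y hAy
          _ ≤ (y / A) ^ b * M * (c * y ^ (-b - 1)) / y := by
              gcongr
              exact min_rpow_le_div_rpow_mul_of_ge hab hA hAy.le
          _ = c * A ^ (-b) * M * y ^ (-2 : ℝ) := by
              rw [div_rpow hy.le hA.le, rpow_neg hA.le, show (-2 : ℝ) = b + (-b - 1) + -1 by ring,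
                rpow_add hy, rpow_add hy, rpow_neg_one]
              field_simp
    _ = ENNReal.ofReal (c * A ^ (-b - 1) * M) := by
        rw [lintegral_const_mul' _ _ ENNReal.ofReal_ne_top, lintegral_Ioi_rpow (by norm_num) hA,
          ← ENNReal.ofReal_mul (by positivity)]
        congr 1
        rw [show (-2 : ℝ) + 1 = -1 by norm_num, sub_eq_add_neg (-b), rpow_add hA, rpow_neg_one]
        ring

lemma lintegral_Ioc_min_rpow_mul_comp_div_le (ha : 0 < a) (hab : a ≤ b) (hA : 0 < A) {u : ℝ}
    (hu : u ≠ 0) {φ : ℝ → ℝ} (hφ : Measurable φ) (hφ0 : 0 ≤ φ) :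
    ∫⁻ y in Ioc 0 A, ENNReal.ofReal (min (y ^ a) (y ^ b) * φ (y / u) / y) ≤
      ENNReal.ofReal (min (A ^ a) (A ^ b) / √(2 * a)) *
        (∫⁻ v, ENNReal.ofReal (φ v ^ 2 / |v|)) ^ (1 / 2 : ℝ) := by
  refine (lintegral_Ioc_min_rpow_mul_div_le ha hab hA (hφ.comp (measurable_div_const u))
    fun y => hφ0 (y / u)).trans (mul_le_mul_right (ENNReal.rpow_le_rpow ?_ (by norm_num)) _)
  calc ∫⁻ y in Ioc 0 A, ENNReal.ofReal (φ (y / u) ^ 2 / y)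
      = ∫⁻ y in Ioc 0 A, ENNReal.ofReal (φ (y / u) ^ 2 / |y|) :=
        setLIntegral_congr_fun measurableSet_Ioc fun y hy => by rw [abs_of_pos hy.1]
    _ ≤ ∫⁻ y, ENNReal.ofReal (φ (y / u) ^ 2 / |y|) := setLIntegral_le_lintegral _ _
    _ = ∫⁻ v, ENNReal.ofReal (φ v ^ 2 / |v|) :=
        lintegral_ofReal_comp_div_div_abs (φ := fun v => φ v ^ 2) (by fun_prop) hu

lemma lintegral_Ioi_min_rpow_mul_comp_div_le (hab : a ≤ b) (hA : 0 < A) {K u : ℝ} (hK : 0 ≤ K)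
    (hu : u ≠ 0) {φ : ℝ → ℝ} (hφ : ∀ v, v ≠ 0 → φ v ≤ K * |v| ^ (-b - 1)) :
    ∫⁻ y in Ioi A, ENNReal.ofReal (min (y ^ a) (y ^ b) * φ (y / u) / y) ≤
      ENNReal.ofReal (K * |u| ^ (b + 1) * A ^ (-b - 1) * min (A ^ a) (A ^ b)) := by
  refine lintegral_Ioi_min_rpow_mul_div_le hab hA (by positivity) fun y hAy => ?_
  have hy : 0 < y := hA.trans hAy
  calc φ (y / u) ≤ K * |y / u| ^ (-b - 1) := hφ _ (div_ne_zero hy.ne' hu)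
    _ = K * |u| ^ (b + 1) * y ^ (-b - 1) := by
        rw [abs_div, abs_of_pos hy, div_rpow hy.le (abs_nonneg u),
          show -b - 1 = -(b + 1) by ring, rpow_neg (abs_nonneg u)]
        field_simp

end MinRpow

theorem stmt6 :
    ∃ C : ℝ, 0 < C ∧ ∀ ℓ p : ℤ, 1 ≤ ℓ → ℓ ≤ |p| → ∀ u : ℝ, u ≠ 0 →
      ∀ g : ℝ → ℂ, Measurable g →
      (∫⁻ v : ℝ, ENNReal.ofReal (‖g v‖ ^ 2 / |v|) ≤ 1) →
      (∀ v : ℝ, v ≠ 0 → ‖g v‖ ≤ |3 * (p : ℝ)| ^ ((ℓ : ℝ) + 3 / 2) * |v| ^ (-(ℓ : ℝ) - 1)) →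
      ∫⁻ y in Set.Ioi (0 : ℝ),
          ENNReal.ofReal (min (y ^ ((1 : ℝ) / 4)) (y ^ (ℓ : ℝ)) * ‖g (y / u)‖ / y) ≤
        ENNReal.ofReal (C * |(p : ℝ)| ^ ((1 : ℝ) / 2) *
          min (|3 * (p : ℝ) * u| ^ ((1 : ℝ) / 4)) (|3 * (p : ℝ) * u| ^ (ℓ : ℝ))) := by
  refine ⟨4, by norm_num, fun ℓ p hℓ hp u hu g hg hL2 hpt => ?_⟩
  have hℓ4 : (1 / 4 : ℝ) ≤ ℓ := by
    have : (1 : ℝ) ≤ ℓ := by exact_mod_cast hℓ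
    linarith
  have hp1 : 1 ≤ |(p : ℝ)| := by rw [← Int.cast_abs]; exact_mod_cast hℓ.trans hp
  have h3p : 0 < |3 * (p : ℝ)| := by rw [abs_mul]; positivity
  set A := |3 * (p : ℝ) * u|
  have hA_eq : A = |3 * (p : ℝ)| * |u| := abs_mul _ _
  have hA : 0 < A := hA_eq ▸ mul_pos h3p (abs_pos.2 hu)
  set M := min (A ^ (1 / 4 : ℝ)) (A ^ (ℓ : ℝ))
  have hM : 0 ≤ M := le_min (rpow_nonneg hA.le _) (rpow_nonneg hA.le _)
  have head := (lintegral_Ioc_min_rpow_mul_comp_div_le (by norm_num) hℓ4 hA hu hg.norm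
    fun v => norm_nonneg (g v)).trans
    (mul_le_of_le_one_right' (ENNReal.rpow_le_one hL2 (by norm_num)))
  have tail := lintegral_Ioi_min_rpow_mul_comp_div_le hℓ4 hA (by positivity) hu hpt
  have hK : |3 * (p : ℝ)| ^ ((ℓ : ℝ) + 3 / 2) * |u| ^ ((ℓ : ℝ) + 1) * A ^ (-(ℓ : ℝ) - 1) =
      |3 * (p : ℝ)| ^ (1 / 2 : ℝ) := by
    rw [show (ℓ : ℝ) + 3 / 2 = 1 / 2 + (ℓ + 1) by ring, show -(ℓ : ℝ) - 1 = -(ℓ + 1) by ring,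
      hA_eq, rpow_add_mul_rpow_mul_mul_rpow_neg h3p (abs_pos.2 hu)]
  have h_sqrt_half : 1 / 2 ≤ √(2 * (1 / 4) : ℝ) :=
    (le_sqrt (by norm_num) (by norm_num)).2 (by norm_num)
  have h_head : M / √(2 * (1 / 4)) ≤ 2 * M := by
    rw [div_le_iff₀ (by positivity)]
    nlinarith
  have hp_sqrt : 1 ≤ |(p : ℝ)| ^ (1 / 2 : ℝ) := one_le_rpow hp1 (by norm_num)
  have h3p_sqrt := abs_three_mul_rpow_half_le (p : ℝ)
  rw [← Ioc_union_Ioi_eq_Ioi hA.le, lintegral_union measurableSet_Ioi Ioc_disjoint_Ioi_same]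
  calc _ ≤ ENNReal.ofReal (M / √(2 * (1 / 4))) +
          ENNReal.ofReal (|3 * (p : ℝ)| ^ (1 / 2 : ℝ) * M) := by
        rw [← hK]
        exact add_le_add head tail
    _ ≤ _ := by
        rw [← ENNReal.ofReal_add (by positivity) (by positivity)]
        gcongr
        nlinarith
end

section
/- Let k and d be integers with d ≥ 0 and k > 3d. Define, for z ∈ ℂ with Re z = 1, the function W_{k,z} : ℝ∖{0} → ℂ by W_{k,z}(u) = u^{k/2}·e^{−zu} for u > 0 and W_{k,z}(u) = 0 for u < 0. Then W_{k,z} is of class C^d on ℝ∖{0}, the norm ‖W_{k,z}‖_{A^d} is finite, and there exists a constant C(k,d) > 0 depending only on k and d such that ‖W_{k,z}‖_{A^d} ≤ C(k,d)·(1+|z|)^d for all z with Re z = 1. -/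
open MeasureTheory Complex Real

/-- The test function `W_{k,z}(u) = u^{k/2} e^{-zu}` for `u > 0`, and `0` for `u < 0`
(the value at `u = 0` is irrelevant). -/
noncomputable def Wkz (k : ℕ) (z : ℂ) (u : ℝ) : ℂ :=
  if 0 < u then ((u ^ ((k : ℝ) / 2) : ℝ) : ℂ) * Complex.exp (-z * u) else 0

/-!
On `u > 0`, Leibniz's rule gives `W^{(j)}(u) = u^{k/2-j} e^{-zu} p_j(-zu)` with `p_j` a polynomial
of degree `j`, and `|e^{-zu}| = e^{-u}` on the line `Re z = 1`. Hence
`(u + u⁻¹)^d |W^{(j)}(u)|² / u ≤ C (1 + |z|)^{2j} u^{k-2j-d-1} (1 + u)^{2(j+d)} e^{-2u}`, and after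
absorbing `(1 + u)^{2(j+d)}` into one factor `e^{-u}` this is a Gamma integrand, integrable at `0`
because `k - 2j - d > 0` follows from `k > 3d`.
-/

open Set Filter Topology Nat

theorem Complex.deriv_ofReal_comp (f : ℝ → ℝ) (x : ℝ) :
    deriv (fun y => ((f y : ℝ) : ℂ)) x = deriv f x := by
  by_cases hf : DifferentiableAt ℝ f x
  · exact hf.hasDerivAt.ofReal_comp.deriv
  · have hf' : ¬DifferentiableAt ℝ (fun y => ((f y : ℝ) : ℂ)) x := fun h => by
      have hre := (reCLM.differentiableAt (x := (f x : ℂ))).comp x h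
      exact hf hre
    rw [deriv_zero_of_not_differentiableAt hf, deriv_zero_of_not_differentiableAt hf', ofReal_zero]

theorem Complex.iteratedDeriv_ofReal_comp (f : ℝ → ℝ) (n : ℕ) :
    iteratedDeriv n (fun y => ((f y : ℝ) : ℂ)) = fun y => ((iteratedDeriv n f y : ℝ) : ℂ) := by
  induction n with
  | zero => rfl
  | succ n ih => ext x; rw [iteratedDeriv_succ, iteratedDeriv_succ, ih, deriv_ofReal_comp]

theorem iteratedDeriv_cexp_const_mul_ofReal (n : ℕ) (c : ℂ) :
    iteratedDeriv n (fun x : ℝ => cexp (c * x)) = fun x : ℝ => c ^ n * cexp (c * x) := by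
  induction n with
  | zero => simp
  | succ n ih =>
    ext x
    have h : HasDerivAt (fun y : ℝ => cexp (c * y)) (cexp (c * x) * c) x := by
      simpa using ((hasDerivAt_id (x : ℂ)).const_mul c).cexp.comp_ofReal
    rw [iteratedDeriv_succ, ih, (h.const_mul (c ^ n)).deriv]
    ring

theorem measurable_iteratedDeriv {F : Type*} [NormedAddCommGroup F] [NormedSpace ℝ F]
    [CompleteSpace F] [MeasurableSpace F] [BorelSpace F] {f : ℝ → F} (hf : Measurable f) :
    ∀ n, Measurable (iteratedDeriv n f)
  | 0 => by simpa using hf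
  | n + 1 => by rw [iteratedDeriv_succ]; exact measurable_deriv _

theorem one_add_pow_mul_exp_neg_le {u : ℝ} (hu : 0 ≤ u) (n : ℕ) :
    (1 + u) ^ n * rexp (-u) ≤ n ! * rexp 1 := by
  have h := Real.pow_div_factorial_le_exp (1 + u) (by linarith) n
  rw [div_le_iff₀ (by positivity), Real.exp_add] at h
  have hinv : rexp u * rexp (-u) = 1 := by rw [← Real.exp_add, add_neg_cancel, Real.exp_zero]
  calc (1 + u) ^ n * rexp (-u) ≤ rexp 1 * rexp u * n ! * rexp (-u) := by gcongr
    _ = n ! * rexp 1 := by linear_combination (n ! * rexp 1) * hinv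

section AdIntegrand

/-- The integrand of `‖W‖_{A^d}`, evaluated on `f = W^{(j)}`. -/
noncomputable def adIntegrand (d : ℕ) (f : ℝ → ℂ) (u : ℝ) : ℝ :=
  (|u| + |u|⁻¹) ^ d * ‖f u‖ ^ 2 / |u|

variable {d n : ℕ} {f : ℝ → ℂ} {A a : ℝ}

theorem adIntegrand_le {u : ℝ} (hu : 0 < u) (hf : ‖f u‖ ≤ A * u ^ a * (1 + u) ^ n * rexp (-u)) :
    adIntegrand d f u ≤ A ^ 2 * ((2 * (n + d))! * rexp 1) * (rexp (-u) * u ^ (2 * a - d - 1)) := by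
  have hweight : (u + u⁻¹) ^ d ≤ (u⁻¹) ^ d * (1 + u) ^ (2 * d) := by
    rw [pow_mul, ← mul_pow]
    gcongr
    have h : u⁻¹ * (1 + u) ^ 2 = u + u⁻¹ + 2 := by field_simp; ring
    linarith
  have hrpow : (u ^ a) ^ 2 * (u⁻¹) ^ d / u = u ^ (2 * a - d - 1) := by
    rw [rpow_sub hu, rpow_sub hu, rpow_one, rpow_natCast, mul_comm 2 a, rpow_mul hu.le,
      rpow_two, inv_pow, div_eq_mul_inv _ (u ^ d)]
  calc adIntegrand d f u = (u + u⁻¹) ^ d * ‖f u‖ ^ 2 / u := by simp [adIntegrand, abs_of_pos hu]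
    _ ≤ ((u⁻¹) ^ d * (1 + u) ^ (2 * d)) * (A * u ^ a * (1 + u) ^ n * rexp (-u)) ^ 2 / u := by
        gcongr
    _ = A ^ 2 * ((1 + u) ^ (2 * (n + d)) * rexp (-u)) *
          (rexp (-u) * ((u ^ a) ^ 2 * (u⁻¹) ^ d / u)) := by
        ring
    _ ≤ A ^ 2 * ((2 * (n + d))! * rexp 1) * (rexp (-u) * u ^ (2 * a - d - 1)) := by
        rw [hrpow]
        gcongr A ^ 2 * ?_ * _
        exact one_add_pow_mul_exp_neg_le hu.le _

theorem integrable_adIntegrand_and_integral_le (hda : d < 2 * a) (hf : Measurable f)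
    (hf_neg : ∀ u < 0, f u = 0)
    (hf_pos : ∀ u, 0 < u → ‖f u‖ ≤ A * u ^ a * (1 + u) ^ n * rexp (-u)) :
    Integrable (adIntegrand d f) ∧
      ∫ u, adIntegrand d f u ≤ A ^ 2 * ((2 * (n + d))! * rexp 1) * Real.Gamma (2 * a - d) := by
  have hs : 0 < 2 * a - d := by linarith
  have hGamma := (GammaIntegral_convergent hs).const_mul (A ^ 2 * ((2 * (n + d))! * rexp 1))
  have hsupp : (Ioi 0).indicator (adIntegrand d f) = adIntegrand d f := by
    refine indicator_eq_self.2 fun u hu => ?_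
    by_contra hpos
    rw [mem_Ioi, not_lt] at hpos
    rcases hpos.lt_or_eq with hneg | rfl
    · exact hu (by simp [adIntegrand, hf_neg u hneg])
    · exact hu (by simp [adIntegrand])
  have hint : IntegrableOn (adIntegrand d f) (Ioi 0) := by
    have hmeas : Measurable (adIntegrand d f) :=
      (((measurable_abs.add measurable_abs.inv).pow_const d).mul (hf.norm.pow_const 2)).div
        measurable_abs
    refine hGamma.mono' hmeas.aestronglyMeasurable ?_
    refine ae_restrict_of_forall_mem measurableSet_Ioi fun u hu => ?_
    rw [Real.norm_of_nonneg (by unfold adIntegrand; positivity)]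
    exact adIntegrand_le hu (hf_pos u hu)
  refine ⟨hsupp ▸ (integrable_indicator_iff measurableSet_Ioi).2 hint, ?_⟩
  rw [← hsupp, integral_indicator measurableSet_Ioi, Gamma_eq_integral hs, ← integral_const_mul]
  exact setIntegral_mono_on hint hGamma measurableSet_Ioi fun u hu =>
    adIntegrand_le hu (hf_pos u hu)

end AdIntegrand

section Wkz

variable {k : ℕ} {z : ℂ}

theorem Wkz_eventuallyEq_of_neg {u : ℝ} (hu : u < 0) : Wkz k z =ᶠ[𝓝 u] fun _ => 0 := by
  filter_upwards [Iio_mem_nhds hu] with v hv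
  simp [Wkz, not_lt.2 (mem_Iio.1 hv).le]

theorem Wkz_eventuallyEq_of_pos {u : ℝ} (hu : 0 < u) :
    Wkz k z =ᶠ[𝓝 u] (fun v : ℝ => ((v ^ ((k : ℝ) / 2) : ℝ) : ℂ)) * fun v : ℝ => cexp (-z * v) := by
  filter_upwards [Ioi_mem_nhds hu] with v hv
  simp [Wkz, mem_Ioi.mp hv]

theorem contDiffAt_ofReal_rpow {r u : ℝ} (hu : u ≠ 0) {n : ℕ∞} :
    ContDiffAt ℝ n (fun v : ℝ => ((v ^ r : ℝ) : ℂ)) u :=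
  ofRealCLM.contDiff.contDiffAt.comp u (Real.contDiffAt_rpow_const_of_ne hu)

theorem contDiff_cexp_const_mul_ofReal (c : ℂ) {n : ℕ∞} :
    ContDiff ℝ n fun v : ℝ => cexp (c * v) :=
  (contDiff_const.mul ofRealCLM.contDiff).cexp

theorem contDiffOn_Wkz (n : ℕ∞) : ContDiffOn ℝ n (Wkz k z) {0}ᶜ := by
  intro u hu
  rcases (mem_compl_singleton_iff.1 hu).lt_or_gt with hneg | hpos
  · exact (contDiffAt_const.congr_of_eventuallyEq (Wkz_eventuallyEq_of_neg hneg)).contDiffWithinAt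
  · exact (((contDiffAt_ofReal_rpow hpos.ne').mul
      (contDiff_cexp_const_mul_ofReal _).contDiffAt).congr_of_eventuallyEq
        (Wkz_eventuallyEq_of_pos hpos)).contDiffWithinAt

theorem measurable_Wkz : Measurable (Wkz k z) :=
  Measurable.ite (measurableSet_lt measurable_const measurable_id) (by fun_prop) measurable_const

theorem iteratedDeriv_Wkz_of_neg (j : ℕ) {u : ℝ} (hu : u < 0) : iteratedDeriv j (Wkz k z) u = 0 := by
  rw [(Wkz_eventuallyEq_of_neg hu).iteratedDeriv_eq, iteratedDeriv_const]
  simp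

theorem iteratedDeriv_Wkz_of_pos (j : ℕ) {u : ℝ} (hu : 0 < u) :
    iteratedDeriv j (Wkz k z) u = ∑ i ∈ Finset.range (j + 1),
      j.choose i * ((descPochhammer ℝ i).eval ((k : ℝ) / 2) * u ^ ((k : ℝ) / 2 - i) : ℝ) *
        ((-z) ^ (j - i) * cexp (-z * u)) := by
  rw [(Wkz_eventuallyEq_of_pos hu).iteratedDeriv_eq, iteratedDeriv_mul
    (contDiffAt_ofReal_rpow hu.ne') (contDiff_cexp_const_mul_ofReal _).contDiffAt]
  simp only [iteratedDeriv_ofReal_comp, iteratedDeriv_cexp_const_mul_ofReal]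
  simp only [iteratedDeriv_eq_iterate, iter_deriv_rpow_const]

theorem norm_cexp_neg_mul_ofReal (hz : z.re = 1) (u : ℝ) : ‖cexp (-z * u)‖ = rexp (-u) := by
  simp [Complex.norm_exp, Complex.mul_re, hz]

theorem norm_iteratedDeriv_Wkz_le (j : ℕ) (hz : z.re = 1) {u : ℝ} (hu : 0 < u) :
    ‖iteratedDeriv j (Wkz k z) u‖ ≤
      (∑ i ∈ Finset.range (j + 1), j.choose i * |(descPochhammer ℝ i).eval ((k : ℝ) / 2)|) *
        (1 + ‖z‖) ^ j * u ^ ((k : ℝ) / 2 - j) * (1 + u) ^ j * rexp (-u) := by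
  rw [iteratedDeriv_Wkz_of_pos j hu]
  simp only [Finset.sum_mul]
  refine (norm_sum_le _ _).trans (Finset.sum_le_sum fun i hi => ?_)
  have hij : i ≤ j := Nat.lt_succ_iff.mp (Finset.mem_range.mp hi)
  have hsplit : u ^ ((k : ℝ) / 2 - i) = u ^ ((k : ℝ) / 2 - j) * u ^ (j - i) := by
    rw [← rpow_natCast, ← rpow_add hu, Nat.cast_sub hij]
    ring_nf
  have hpow : (u * ‖z‖) ^ (j - i) ≤ ((1 + u) * (1 + ‖z‖)) ^ j :=
    calc (u * ‖z‖) ^ (j - i) ≤ ((1 + u) * (1 + ‖z‖)) ^ (j - i) := by gcongr <;> linarith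
      _ ≤ ((1 + u) * (1 + ‖z‖)) ^ j :=
        pow_le_pow_right₀ (one_le_mul_of_one_le_of_one_le (by linarith) (by simp)) (Nat.sub_le j i)
  calc _ = j.choose i * |(descPochhammer ℝ i).eval ((k : ℝ) / 2)| * u ^ ((k : ℝ) / 2 - j) *
        (u * ‖z‖) ^ (j - i) * rexp (-u) := by
        rw [norm_mul, norm_mul, norm_mul, norm_pow, norm_neg, norm_cexp_neg_mul_ofReal hz,
          Complex.norm_natCast, Complex.norm_real, Real.norm_eq_abs, abs_mul,
          abs_of_pos (rpow_pos_of_pos hu _), hsplit]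
        ring
    _ ≤ j.choose i * |(descPochhammer ℝ i).eval ((k : ℝ) / 2)| * u ^ ((k : ℝ) / 2 - j) *
        ((1 + u) * (1 + ‖z‖)) ^ j * rexp (-u) := by gcongr
    _ = _ := by rw [mul_pow]; ring

theorem exists_sqrt_integral_adIntegrand_iteratedDeriv_Wkz_le {d j : ℕ} (hkd : 3 * d < k)
    (hj : j ≤ d) :
    ∃ C, 0 ≤ C ∧ ∀ z : ℂ, z.re = 1 →
      Integrable (adIntegrand d (iteratedDeriv j (Wkz k z))) ∧
        √(∫ u, adIntegrand d (iteratedDeriv j (Wkz k z)) u) ≤ C * (1 + ‖z‖) ^ j := by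
  set M := ∑ i ∈ Finset.range (j + 1), j.choose i * |(descPochhammer ℝ i).eval ((k : ℝ) / 2)|
  set K := (2 * (j + d))! * rexp 1 * Real.Gamma (2 * ((k : ℝ) / 2 - j) - d)
  refine ⟨M * √K, by positivity, fun z hz => ?_⟩
  have hda : (d : ℝ) < 2 * ((k : ℝ) / 2 - j) := by
    have : (3 * d : ℝ) < k := by exact_mod_cast hkd
    have : (j : ℝ) ≤ d := by exact_mod_cast hj
    linarith
  obtain ⟨hint, hle⟩ := integrable_adIntegrand_and_integral_le (A := M * (1 + ‖z‖) ^ j) hda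
    (measurable_iteratedDeriv measurable_Wkz j) (fun u hu => iteratedDeriv_Wkz_of_neg j hu)
    (fun u hu => (norm_iteratedDeriv_Wkz_le j hz hu).trans_eq (by ring))
  refine ⟨hint, ?_⟩
  calc √(∫ u, adIntegrand d (iteratedDeriv j (Wkz k z)) u) ≤ √((M * (1 + ‖z‖) ^ j) ^ 2 * K) := by
        rw [← mul_assoc]; exact sqrt_le_sqrt hle
    _ = M * √K * (1 + ‖z‖) ^ j := by
        rw [sqrt_mul (sq_nonneg _), sqrt_sq (by positivity)]
        ring

end Wkz

theorem stmt10 (k d : ℕ) (hkd : 3 * d < k) :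
    ∃ C : ℝ, 0 < C ∧ ∀ z : ℂ, z.re = 1 →
      ContDiffOn ℝ (d : ℕ∞) (Wkz k z) {(0 : ℝ)}ᶜ ∧
      (∀ j ≤ d, Integrable (fun u : ℝ =>
        (|u| + |u|⁻¹) ^ d * ‖iteratedDeriv j (Wkz k z) u‖ ^ 2 / |u|)) ∧
      ∑ j ∈ Finset.range (d + 1),
          Real.sqrt (∫ u : ℝ,
            (|u| + |u|⁻¹) ^ d * ‖iteratedDeriv j (Wkz k z) u‖ ^ 2 / |u|) ≤
        C * (1 + ‖z‖) ^ d := by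
  choose! C hC_nonneg hC using
    fun j (hj : j ≤ d) => exists_sqrt_integral_adIntegrand_iteratedDeriv_Wkz_le hkd hj
  have hrange : ∀ j ∈ Finset.range (d + 1), j ≤ d := fun j hj => Finset.mem_range_succ_iff.1 hj
  refine ⟨∑ j ∈ Finset.range (d + 1), C j + 1,
    add_pos_of_nonneg_of_pos (Finset.sum_nonneg fun j hj => hC_nonneg j (hrange j hj)) one_pos,
    fun z hz => ⟨contDiffOn_Wkz d, fun j hj => (hC j hj z hz).1, ?_⟩⟩
  have hz1 : 1 ≤ 1 + ‖z‖ := le_add_of_nonneg_right (norm_nonneg z)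
  calc _ ≤ ∑ j ∈ Finset.range (d + 1), C j * (1 + ‖z‖) ^ d :=
        Finset.sum_le_sum fun j hj => (hC j (hrange j hj) z hz).2.trans <|
          mul_le_mul_of_nonneg_left (pow_le_pow_right₀ hz1 (hrange j hj)) (hC_nonneg j (hrange j hj))
    _ ≤ (∑ j ∈ Finset.range (d + 1), C j + 1) * (1 + ‖z‖) ^ d := by
        rw [← Finset.sum_mul]
        gcongr
        linarith
end
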